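/- Let U = R_B R_A be one step of the quantum walk on the extended welded tree graph G_n' of odd depth n. Then −U transduces |ss'⟩ into |t't⟩ with transduction complexity at most 3(n+1); that is, there exists a vector v in the span of {|e⟩ : e ∈ E} with ‖v‖² ≤ 3(n+1) such that −U(|ss'⟩ + v) = |t't⟩ + v. -/

import Mathlib

/-!
**Statement 11.**
Let `U = R_B R_A` be one step of the quantum walk on the extended welded tree graph `G_n'` of
odd depth `n`.  Then `−U` transduces `|ss'⟩` into `|t't⟩` with transduction complexity at
most `3(n+1)`: there is a vector `v` in the span of `{|e⟩ : e ∈ E}` with `‖v‖² ≤ 3(n+1)`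
such that `−U(|ss'⟩ + v) = |t't⟩ + v`.

The welded tree graph is modelled abstractly: vertices `V` carry a side (`false` = left tree,
`true` = right tree) and a depth `≤ n`; edges `E` carry a layer `lay e ∈ {1, …, n+1}`
(`lay e = n+1` meaning a middle edge) and a side (meaningful for tree edges), with endpoint
maps `ep0` (shallower / left endpoint) and `ep1` (deeper / right endpoint).  A tree edge of
layer `j` joins a vertex of depth `j−1` to one of depth `j` on its own side; a middle edge
joins a left leaf to a right leaf.  Every vertex of depth `< n` has exactly two child edges,
every vertex of depth `≥ 1` has exactly one parent tree edge, and every leaf is incident to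
exactly two middle edges; `s` and `t` are the unique roots of the two trees.  All edges have
weight 1.  The walk space is `EuclideanSpace ℂ (E ⊕ Bool)` (`Sum.inr false = ss'`,
`Sum.inr true = t't`); part `A` consists of left vertices of even depth and right vertices of
odd depth, part `B` of the remaining vertices.  `R_A` is the unitary acting as `−1` on
`span{ψ_u : u ∈ A}` and as the identity on its orthogonal complement, specified here by these
defining properties (similarly `R_B`).
-/

noncomputable section

namespace Stmt11

variable {V E : Type*} [Fintype V] [Fintype E] [DecidableEq V] [DecidableEq E]

def ket (x : E ⊕ Bool) : EuclideanSpace ℂ (E ⊕ Bool) := EuclideanSpace.single x 1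

def inA (sideV : V → Bool) (depth : V → ℕ) (u : V) : Prop :=
  (sideV u = false ∧ Even (depth u)) ∨ (sideV u = true ∧ Odd (depth u))

def inB (sideV : V → Bool) (depth : V → ℕ) (u : V) : Prop :=
  (sideV u = false ∧ Odd (depth u)) ∨ (sideV u = true ∧ Even (depth u))

def psi (ep0 ep1 : E → V) (s t : V) (u : V) : EuclideanSpace ℂ (E ⊕ Bool) :=
  (∑ e ∈ Finset.univ.filter (fun e => ep0 e = u), ket (Sum.inl e)) +
  (∑ e ∈ Finset.univ.filter (fun e => ep1 e = u), ket (Sum.inl e)) +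
  (if u = s then ket (Sum.inr false) else 0) +
  (if u = t then ket (Sum.inr true) else 0)

end Stmt11

/-!
Let `Φ_τ = potential lay sideE τ` be the edge vector with amplitude `(-1/2)^⌈j/2⌉` on the layer-`j`
edges of the tree of side `τ` and `(-1/2)^⌊j/2⌋` on those of the other tree; both roundings agree on
the middle layer `n + 1`, which is even.  Below a vertex of part `τ` (`A` for `τ = false`, `B` for
`τ = true`) each of its two child edges carries `-1/2` times the amplitude of its parent edge, so
its star sees `2 · (-1/2) a + a = 0`, the dangling edge at the root playing the parent edge there:
`Φ_τ + |root_τ⟩` is orthogonal to every star of part `τ`.  As every edge has exactly one endpoint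
in part `τ`, flipping the rounding gives `Φ_{¬τ} + |root_τ⟩ = ∑_{u ∈ τ} (-1/2)^⌈depth u/2⌉ ψ_u`.
With `v = (Φ_A + Φ_B)/2` and `χ = (Φ_A - Φ_B)/2` the reflections therefore give
`R_A (|ss'⟩ + v) = χ` and `R_B χ = -(|t't⟩ + v)`.  Layer `j` has at most `2^(j+1)` edges and
`|v_e|² ≤ 2^(-j)` on it, so `‖v‖² ≤ 2(n + 1)`.
-/

namespace Stmt11

open Finset

lemma apply_eq_of_map_sub_of_map_add {K M : Type*} [Field K] [CharZero K] [AddCommGroup M]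
    [Module K M] (R : M →ₗ[K] M) {a b : M} (hsub : R (a - b) = -(a - b))
    (hadd : R (a + b) = a + b) :
    R a = b := by
  have h : (2 : K) • R a = (2 : K) • b := by
    rw [← map_smul, two_smul, show a + a = (a + b) + (a - b) by abel, map_add, hsub, hadd]
    module
  exact smul_right_injective M two_ne_zero h

/-- `(-1/2)^⌈j/2⌉` on the tree of side `τ`, `(-1/2)^⌊j/2⌋` on the other one. -/
def layerAmp (τ σ : Bool) (j : ℕ) : ℂ := (-1/2 : ℂ) ^ ((j + (!xor τ σ).toNat) / 2)

lemma layerAmp_zero (τ σ : Bool) : layerAmp τ σ 0 = 1 := by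
  cases τ <;> cases σ <;> simp [layerAmp]

lemma layerAmp_of_even {j : ℕ} (hj : Even j) (τ σ : Bool) :
    layerAmp τ σ j = (-1/2 : ℂ) ^ (j / 2) := by
  obtain ⟨k, rfl⟩ := hj
  cases τ <;> cases σ <;> simp [layerAmp] <;> congr 1 <;> omega

lemma layerAmp_succ_of_mod_two {τ σ : Bool} {d : ℕ} (hd : d % 2 = (xor τ σ).toNat) :
    layerAmp τ σ (d + 1) = -1/2 * layerAmp τ σ d := by
  unfold layerAmp
  rw [← pow_succ']
  congr 1
  cases τ <;> cases σ <;> simp at hd ⊢ <;> omega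

lemma layerAmp_not_of_mod_two {τ σ : Bool} {d j : ℕ} (hd : d % 2 = (xor τ σ).toNat)
    (hj : j = d ∨ j = d + 1) :
    layerAmp (!τ) σ j = (-1/2 : ℂ) ^ ((d + 1) / 2) := by
  unfold layerAmp
  congr 1
  cases τ <;> cases σ <;> simp at hd ⊢ <;> omega

lemma norm_sq_half_add_layerAmp_le (σ : Bool) (j : ℕ) :
    ‖(1/2 : ℂ) * (layerAmp false σ j + layerAmp true σ j)‖ ^ 2 ≤ (1/2 : ℝ) ^ j := by
  have hq : ‖(-1/2 : ℂ)‖ = 1/2 := by norm_num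
  obtain ⟨k, rfl | rfl⟩ := Nat.even_or_odd' j
  · rw [layerAmp_of_even (even_two_mul k), layerAmp_of_even (even_two_mul k),
      Nat.mul_div_cancel_left k two_pos, ← two_mul, ← mul_assoc, one_div_mul_cancel two_ne_zero,
      one_mul, norm_pow, hq, ← pow_mul, mul_comm]
  · have hsum : layerAmp false σ (2 * k + 1) + layerAmp true σ (2 * k + 1) =
        (1/2 : ℂ) * (-1/2) ^ k := by
      cases σ <;> simp [layerAmp] <;> (rw [show (2 * k + 1 + 1) / 2 = k + 1 by omega,
        show (2 * k + 1) / 2 = k by omega, pow_succ]; ring)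
    have hpos : (0 : ℝ) < (1/4) ^ k := by positivity
    have hlhs : ‖(1/2 : ℂ) * (1/2 * (-1/2) ^ k)‖ ^ 2 = 1/16 * (1/4 : ℝ) ^ k := by
      rw [norm_mul, norm_mul, norm_pow, hq, mul_pow, mul_pow, ← pow_mul, mul_comm k, pow_mul]
      norm_num
      ring
    have hrhs : (1/2 : ℝ) ^ (2 * k + 1) = 1/2 * (1/4) ^ k := by
      rw [pow_succ, pow_mul]; norm_num; ring
    rw [hsum, hlhs, hrhs]
    linarith

section
variable {E : Type*} [DecidableEq E]

lemma ket_apply (x y : E ⊕ Bool) : ket x y = if y = x then 1 else 0 :=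
  PiLp.single_apply 2 ℂ x 1 y

end

section
variable {V : Type*}

abbrev part (sideV : V → Bool) (depth : V → ℕ) (τ : Bool) (u : V) : Prop :=
  depth u % 2 = (xor τ (sideV u)).toNat

lemma inA_iff_part {sideV : V → Bool} {depth : V → ℕ} {u : V} :
    inA sideV depth u ↔ part sideV depth false u := by
  cases h : sideV u <;> simp [inA, part, h, Nat.even_iff, Nat.odd_iff]

lemma inB_iff_part {sideV : V → Bool} {depth : V → ℕ} {u : V} :
    inB sideV depth u ↔ part sideV depth true u := by
  cases h : sideV u <;> simp [inB, part, h, Nat.even_iff, Nat.odd_iff]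

end

section
variable {V E : Type*} [Fintype E] [DecidableEq V]

structure IsWeldedTree (n : ℕ) (sideV : V → Bool) (depth : V → ℕ) (lay : E → ℕ)
    (sideE : E → Bool) (ep0 ep1 : E → V) (s t : V) : Prop where
  odd : Odd n
  lay_mem : ∀ e, 1 ≤ lay e ∧ lay e ≤ n + 1
  tree : ∀ e, lay e ≤ n → sideV (ep0 e) = sideE e ∧ depth (ep0 e) = lay e - 1 ∧
    sideV (ep1 e) = sideE e ∧ depth (ep1 e) = lay e
  mid : ∀ e, lay e = n + 1 → sideV (ep0 e) = false ∧ depth (ep0 e) = n ∧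
    sideV (ep1 e) = true ∧ depth (ep1 e) = n
  root_s : sideV s = false ∧ depth s = 0
  root_t : sideV t = true ∧ depth t = 0
  root_unique : ∀ u, depth u = 0 → (sideV u = false → u = s) ∧ (sideV u = true → u = t)
  card_child : ∀ u, depth u < n → #{e | ep0 e = u} = 2
  card_parent : ∀ u, 1 ≤ depth u → #{e | lay e ≤ n ∧ ep1 e = u} = 1
  card_midL : ∀ u, sideV u = false → depth u = n → #{e | lay e = n + 1 ∧ ep0 e = u} = 2
  card_midR : ∀ u, sideV u = true → depth u = n → #{e | lay e = n + 1 ∧ ep1 e = u} = 2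

namespace IsWeldedTree

variable {n : ℕ} {sideV : V → Bool} {depth : V → ℕ} {lay : E → ℕ} {sideE : E → Bool}
  {ep0 ep1 : E → V} {s t : V}

lemma lay_eq_of_not_le (W : IsWeldedTree n sideV depth lay sideE ep0 ep1 s t) {e : E}
    (he : ¬ lay e ≤ n) : lay e = n + 1 := by
  have := (W.lay_mem e).2; omega

lemma lay_eq_depth_ep0_add_one (W : IsWeldedTree n sideV depth lay sideE ep0 ep1 s t) (e : E) :
    lay e = depth (ep0 e) + 1 := by
  by_cases h : lay e ≤ n
  · have := (W.tree e h).2.1; have := (W.lay_mem e).1; omega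
  · have := W.lay_eq_of_not_le h; have := (W.mid e this).2.1; omega

lemma exists_parent (W : IsWeldedTree n sideV depth lay sideE ep0 ep1 s t) {u : V}
    (hu : 1 ≤ depth u) : ∃ e, lay e ≤ n ∧ ep1 e = u := by
  obtain ⟨e, he⟩ := card_pos.mp (W.card_parent u hu ▸ Nat.one_pos)
  exact ⟨e, (mem_filter.mp he).2⟩

lemma depth_le (W : IsWeldedTree n sideV depth lay sideE ep0 ep1 s t) (u : V) : depth u ≤ n := by
  rcases Nat.eq_zero_or_pos (depth u) with h | h
  · omega
  · obtain ⟨e, hle, rfl⟩ := W.exists_parent h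
    exact (W.tree e hle).2.2.2 ▸ hle

lemma card_ep0_add_card_mid_ep1 (W : IsWeldedTree n sideV depth lay sideE ep0 ep1 s t) (u : V) :
    #{e | ep0 e = u} + #{e | lay e = n + 1 ∧ ep1 e = u} = 2 := by
  rcases (W.depth_le u).lt_or_eq with hlt | heq
  · rw [W.card_child u hlt, card_eq_zero.mpr (filter_eq_empty_iff.mpr ?_)]
    rintro e - ⟨hl, rfl⟩
    exact hlt.ne (W.mid e hl).2.2.2
  cases hσ : sideV u
  · have hdown : #{e | ep0 e = u} = #{e | lay e = n + 1 ∧ ep0 e = u} := by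
      congr 1
      refine filter_congr fun e _ => ⟨fun h => ⟨?_, h⟩, And.right⟩
      rw [W.lay_eq_depth_ep0_add_one, h, heq]
    rw [hdown, W.card_midL u hσ heq, card_eq_zero.mpr (filter_eq_empty_iff.mpr ?_)]
    rintro e - ⟨hl, rfl⟩
    simp [(W.mid e hl).2.2.1] at hσ
  · rw [W.card_midR u hσ heq, card_eq_zero.mpr (filter_eq_empty_iff.mpr ?_)]
    rintro e - rfl
    have hl : lay e = n + 1 := by rw [W.lay_eq_depth_ep0_add_one, heq]
    simp [(W.mid e hl).1] at hσ

/-- `sideE` means nothing on middle edges, whence the hypothesis `hf`. -/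
lemma apply_eq_of_ep0_or_mid_ep1 (W : IsWeldedTree n sideV depth lay sideE ep0 ep1 s t)
    (f : Bool → ℕ → ℂ) (hf : f false (n + 1) = f true (n + 1)) {u : V} {e : E}
    (he : ep0 e = u ∨ (lay e = n + 1 ∧ ep1 e = u)) :
    f (sideE e) (lay e) = f (sideV u) (depth u + 1) := by
  by_cases hl : lay e ≤ n
  · rcases he with rfl | ⟨h, -⟩
    · rw [(W.tree e hl).1, ← W.lay_eq_depth_ep0_add_one]
    · omega
  · have hl' := W.lay_eq_of_not_le hl
    have hd : depth u = n := by
      rcases he with rfl | ⟨-, rfl⟩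
      exacts [(W.mid e hl').2.1, (W.mid e hl').2.2.2]
    rw [hl', hd]
    cases sideE e <;> cases sideV u <;> simp [hf]

lemma sum_ep0_add_sum_mid_ep1 (W : IsWeldedTree n sideV depth lay sideE ep0 ep1 s t)
    (f : Bool → ℕ → ℂ) (hf : f false (n + 1) = f true (n + 1)) (u : V) :
    ∑ e with ep0 e = u, f (sideE e) (lay e) +
        ∑ e with lay e = n + 1 ∧ ep1 e = u, f (sideE e) (lay e) =
      2 * f (sideV u) (depth u + 1) := by
  rw [sum_congr rfl fun e he => W.apply_eq_of_ep0_or_mid_ep1 f hf (Or.inl (mem_filter.mp he).2),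
    sum_congr rfl fun e he => W.apply_eq_of_ep0_or_mid_ep1 f hf (Or.inr (mem_filter.mp he).2),
    sum_const, sum_const, ← add_smul, W.card_ep0_add_card_mid_ep1 u, two_nsmul, two_mul]

lemma sum_tree_ep1 (W : IsWeldedTree n sideV depth lay sideE ep0 ep1 s t) (f : Bool → ℕ → ℂ)
    (u : V) :
    ∑ e with lay e ≤ n ∧ ep1 e = u, f (sideE e) (lay e) =
      if depth u = 0 then 0 else f (sideV u) (depth u) := by
  split_ifs with hd
  · refine sum_eq_zero fun e he => absurd hd ?_
    obtain ⟨hl, rfl⟩ := (mem_filter.mp he).2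
    have := (W.tree e hl).2.2.2; have := (W.lay_mem e).1; omega
  · have hparent : ∀ e ∈ ({e | lay e ≤ n ∧ ep1 e = u} : Finset E),
        f (sideE e) (lay e) = f (sideV u) (depth u) := by
      intro e he
      obtain ⟨hl, rfl⟩ := (mem_filter.mp he).2
      rw [(W.tree e hl).2.2.1, (W.tree e hl).2.2.2]
    rw [sum_congr rfl hparent, sum_const, W.card_parent u (by omega), one_smul]

lemma sum_ep1_eq_add (W : IsWeldedTree n sideV depth lay sideE ep0 ep1 s t) (g : E → ℂ)
    (u : V) :
    ∑ e with ep1 e = u, g e =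
      ∑ e with lay e ≤ n ∧ ep1 e = u, g e + ∑ e with lay e = n + 1 ∧ ep1 e = u, g e := by
  rw [← sum_filter_add_sum_filter_not _ (fun e => lay e ≤ n), filter_filter, filter_filter]
  congr 2
  · exact filter_congr fun e _ => and_comm
  · refine filter_congr fun e _ => ?_
    have := (W.lay_mem e).2
    exact ⟨fun ⟨h1, h2⟩ => ⟨by omega, h1⟩, fun ⟨h1, h2⟩ => ⟨h2, by omega⟩⟩

lemma layerAmp_not_eq_endpoints (W : IsWeldedTree n sideV depth lay sideE ep0 ep1 s t)
    (τ : Bool) (e : E) :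
    layerAmp (!τ) (sideE e) (lay e) =
      (if part sideV depth τ (ep0 e) then (-1/2 : ℂ) ^ ((depth (ep0 e) + 1) / 2) else 0) +
      (if part sideV depth τ (ep1 e) then (-1/2 : ℂ) ^ ((depth (ep1 e) + 1) / 2) else 0) := by
  unfold part
  by_cases hl : lay e ≤ n
  · obtain ⟨h0s, h0d, h1s, h1d⟩ := W.tree e hl
    have hpos := (W.lay_mem e).1
    rw [h0s, h0d, h1s, h1d]
    have hb := Bool.toNat_le (xor τ (sideE e))
    by_cases hp : lay e % 2 = (xor τ (sideE e)).toNat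
    · rw [if_neg (by omega), if_pos hp, zero_add, layerAmp_not_of_mod_two hp (Or.inl rfl)]
    · have hp' : (lay e - 1) % 2 = (xor τ (sideE e)).toNat := by omega
      rw [if_pos hp', if_neg hp, add_zero, layerAmp_not_of_mod_two hp' (Or.inr (by omega))]
  · have hl' := W.lay_eq_of_not_le hl
    obtain ⟨h0s, h0d, h1s, h1d⟩ := W.mid e hl'
    obtain ⟨k, rfl⟩ := W.odd
    rw [h0s, h0d, h1s, h1d, hl', layerAmp_of_even (by simp [parity_simps])]
    cases τ <;> simp

variable [Fintype V]

lemma card_depth_zero_le (W : IsWeldedTree n sideV depth lay sideE ep0 ep1 s t) :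
    #{u | depth u = 0} ≤ 2 := by
  refine (card_le_card (t := {s, t}) fun u hu => ?_).trans card_le_two
  have hu := (mem_filter.mp hu).2
  cases hσ : sideV u
  · simp [(W.root_unique u hu).1 hσ]
  · simp [(W.root_unique u hu).2 hσ]

lemma card_depth_succ_le (W : IsWeldedTree n sideV depth lay sideE ep0 ep1 s t) (j : ℕ) :
    #{u | depth u = j + 1} ≤ #{e | lay e = j + 1} := by
  refine card_le_card_of_surjOn ep1 fun u hu => ?_
  have hu : depth u = j + 1 := (mem_filter.mp hu).2
  obtain ⟨e, hl, rfl⟩ := W.exists_parent (u := u) (by omega)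
  exact ⟨e, by simp [← hu, (W.tree e hl).2.2.2], rfl⟩

lemma card_lay_succ_le (W : IsWeldedTree n sideV depth lay sideE ep0 ep1 s t) (j : ℕ) :
    #{e | lay e = j + 1} ≤ 2 * #{u | depth u = j} := by
  refine card_le_mul_card_image_of_maps_to (f := ep0) (fun e he => ?_) 2 fun u _ => ?_
  · have := W.lay_eq_depth_ep0_add_one e
    simp only [mem_filter, mem_univ, true_and] at he ⊢
    omega
  · refine (card_le_card fun e he => ?_).trans (Nat.le.intro (W.card_ep0_add_card_mid_ep1 u))
    simp only [mem_filter, mem_univ, true_and] at he ⊢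
    exact he.2

lemma card_depth_le (W : IsWeldedTree n sideV depth lay sideE ep0 ep1 s t) (j : ℕ) :
    #{u | depth u = j} ≤ 2 ^ (j + 1) := by
  induction j with
  | zero => exact W.card_depth_zero_le
  | succ j ih =>
    calc #{u | depth u = j + 1} ≤ #{e | lay e = j + 1} := W.card_depth_succ_le j
      _ ≤ 2 * #{u | depth u = j} := W.card_lay_succ_le j
      _ ≤ 2 ^ (j + 1 + 1) := by rw [pow_succ']; omega

lemma sum_half_pow_lay_le (W : IsWeldedTree n sideV depth lay sideE ep0 ep1 s t) :
    ∑ e, (1/2 : ℝ) ^ lay e ≤ 2 * (n + 1) := by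
  have hlayer : ∀ j ∈ Icc 1 (n + 1), ∑ e with lay e = j, (1/2 : ℝ) ^ lay e ≤ 2 := by
    intro j hj
    obtain ⟨i, rfl⟩ := Nat.exists_eq_add_of_le' (mem_Icc.mp hj).1
    have hcard : (#{e | lay e = i + 1} : ℝ) ≤ 2 ^ (i + 2) := by
      have := W.card_depth_le i
      exact_mod_cast (W.card_lay_succ_le i).trans (by rw [pow_succ']; omega)
    rw [sum_congr rfl fun e he => by rw [(mem_filter.mp he).2], sum_const, nsmul_eq_mul]
    calc (#{e | lay e = i + 1} : ℝ) * (1/2) ^ (i + 1) ≤ 2 ^ (i + 2) * (1/2) ^ (i + 1) := by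
          gcongr
      _ = 2 := by rw [pow_succ 2 (i + 1), mul_comm _ (2 : ℝ), mul_assoc, ← mul_pow]; norm_num
  rw [← sum_fiberwise_of_maps_to (g := lay) (t := Icc 1 (n + 1))
    fun e _ => mem_Icc.mpr (W.lay_mem e)]
  refine (sum_le_sum hlayer).trans ?_
  rw [sum_const, Nat.card_Icc, nsmul_eq_mul]
  push_cast
  linarith

end IsWeldedTree

variable [DecidableEq E]

lemma psi_apply_inl (ep0 ep1 : E → V) (s t u : V) (e : E) :
    psi ep0 ep1 s t u (Sum.inl e) =
      (if ep0 e = u then 1 else 0) + (if ep1 e = u then 1 else 0) := by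
  simp only [psi, WithLp.ofLp_add, WithLp.ofLp_sum, Pi.add_apply, Finset.sum_apply, ket_apply,
    apply_ite (fun w : EuclideanSpace ℂ (E ⊕ Bool) => w (Sum.inl e)), WithLp.ofLp_zero,
    Pi.zero_apply]
  simp

lemma psi_apply_inr (ep0 ep1 : E → V) (s t u : V) (b : Bool) :
    psi ep0 ep1 s t u (Sum.inr b) = if u = (if b then t else s) then 1 else 0 := by
  simp only [psi, WithLp.ofLp_add, WithLp.ofLp_sum, Pi.add_apply, Finset.sum_apply, ket_apply,
    apply_ite (fun w : EuclideanSpace ℂ (E ⊕ Bool) => w (Sum.inr b)), WithLp.ofLp_zero,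
    Pi.zero_apply]
  cases b <;> simp

lemma inner_psi (ep0 ep1 : E → V) (s t u : V) (w : EuclideanSpace ℂ (E ⊕ Bool)) :
    inner ℂ (psi ep0 ep1 s t u) w =
      (∑ e with ep0 e = u, w (Sum.inl e)) + (∑ e with ep1 e = u, w (Sum.inl e)) +
      (if u = s then w (Sum.inr false) else 0) + (if u = t then w (Sum.inr true) else 0) := by
  simp only [psi, inner_add_left, sum_inner, ket, EuclideanSpace.inner_single_left, map_one,
    one_mul, apply_ite (fun z : EuclideanSpace ℂ (E ⊕ Bool) => inner ℂ z w), inner_zero_left]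

lemma sum_smul_psi_apply_inl (ep0 ep1 : E → V) (s t : V) (S : Finset V) (c : V → ℂ)
    (e : E) :
    (∑ u ∈ S, c u • psi ep0 ep1 s t u) (Sum.inl e) =
      (if ep0 e ∈ S then c (ep0 e) else 0) + (if ep1 e ∈ S then c (ep1 e) else 0) := by
  simp [WithLp.ofLp_sum, psi_apply_inl, mul_add, sum_add_distrib]

lemma sum_smul_psi_apply_inr (ep0 ep1 : E → V) (s t : V) (S : Finset V) (c : V → ℂ)
    (b : Bool) :
    (∑ u ∈ S, c u • psi ep0 ep1 s t u) (Sum.inr b) =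
      if (if b then t else s) ∈ S then c (if b then t else s) else 0 := by
  simp [WithLp.ofLp_sum, psi_apply_inr]

def potential (lay : E → ℕ) (sideE : E → Bool) (τ : Bool) :
    EuclideanSpace ℂ (E ⊕ Bool) :=
  ∑ e, layerAmp τ (sideE e) (lay e) • ket (Sum.inl e)

lemma potential_apply_inl (lay : E → ℕ) (sideE : E → Bool) (τ : Bool) (e : E) :
    potential lay sideE τ (Sum.inl e) = layerAmp τ (sideE e) (lay e) := by
  simp [potential, WithLp.ofLp_sum, ket_apply]

lemma potential_apply_inr (lay : E → ℕ) (sideE : E → Bool) (τ b : Bool) :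
    potential lay sideE τ (Sum.inr b) = 0 := by
  simp [potential, WithLp.ofLp_sum, ket_apply]

lemma potential_mem_span (lay : E → ℕ) (sideE : E → Bool) (τ : Bool) :
    potential lay sideE τ ∈ Submodule.span ℂ (Set.range fun e : E => ket (Sum.inl e)) :=
  (Submodule.mem_span_range_iff_exists_fun ℂ).mpr ⟨_, rfl⟩

namespace IsWeldedTree

variable {n : ℕ} {sideV : V → Bool} {depth : V → ℕ} {lay : E → ℕ} {sideE : E → Bool}
  {ep0 ep1 : E → V} {s t : V}

lemma inner_psi_of_apply_inl (W : IsWeldedTree n sideV depth lay sideE ep0 ep1 s t)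
    (f : Bool → ℕ → ℂ) (hf : f false (n + 1) = f true (n + 1))
    {w : EuclideanSpace ℂ (E ⊕ Bool)}
    (hw : ∀ e, w (Sum.inl e) = f (sideE e) (lay e)) (u : V) :
    inner ℂ (psi ep0 ep1 s t u) w =
      2 * f (sideV u) (depth u + 1) + (if depth u = 0 then 0 else f (sideV u) (depth u)) +
      (if u = s then w (Sum.inr false) else 0) + (if u = t then w (Sum.inr true) else 0) := by
  rw [inner_psi, W.sum_ep1_eq_add]
  simp only [hw]
  rw [← W.sum_ep0_add_sum_mid_ep1 f hf u, ← W.sum_tree_ep1 f u]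
  ring

lemma inner_psi_potential_add_ket_eq_zero (W : IsWeldedTree n sideV depth lay sideE ep0 ep1 s t)
    (τ : Bool) {u : V} (hu : part sideV depth τ u) :
    inner ℂ (psi ep0 ep1 s t u) (potential lay sideE τ + ket (Sum.inr τ)) = 0 := by
  have hmid : layerAmp τ false (n + 1) = layerAmp τ true (n + 1) := by
    rw [layerAmp_of_even W.odd.add_one, layerAmp_of_even W.odd.add_one]
  rw [W.inner_psi_of_apply_inl (layerAmp τ) hmid fun e => by simp [potential_apply_inl, ket_apply]]
  simp only [WithLp.ofLp_add, Pi.add_apply, potential_apply_inr, ket_apply, zero_add,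
    Sum.inr.injEq, layerAmp_succ_of_mod_two hu]
  by_cases hd : depth u = 0
  · have hσ : sideV u = τ := by
      have h0 : (xor τ (sideV u)).toNat = 0 := by unfold part at hu; omega
      revert h0; cases τ <;> cases sideV u <;> simp
    have hroot := W.root_unique u hd
    rw [hd, layerAmp_zero]
    cases τ
    · have hut : u ≠ t := fun h => by simp [h, W.root_t.1] at hσ
      rw [if_pos (hroot.1 hσ), if_neg hut]
      norm_num
    · have hus : u ≠ s := fun h => by simp [h, W.root_s.1] at hσ
      rw [if_neg hus, if_pos (hroot.2 hσ)]
      norm_num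
  · have hus : u ≠ s := fun h => hd (h ▸ W.root_s.2)
    have hut : u ≠ t := fun h => hd (h ▸ W.root_t.2)
    simp only [hd, hus, hut, if_false]
    ring

lemma potential_not_add_ket_eq_sum [Fintype V]
    (W : IsWeldedTree n sideV depth lay sideE ep0 ep1 s t) (τ : Bool) :
    potential lay sideE (!τ) + ket (Sum.inr τ) =
      ∑ u with part sideV depth τ u,
        (-1/2 : ℂ) ^ ((depth u + 1) / 2) • psi ep0 ep1 s t u := by
  ext x
  rcases x with e | b
  · simp [sum_smul_psi_apply_inl, potential_apply_inl, ket_apply, W.layerAmp_not_eq_endpoints τ e]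
  · rw [sum_smul_psi_apply_inr]
    simp only [WithLp.ofLp_add, Pi.add_apply, potential_apply_inr, ket_apply, zero_add, mem_filter,
      mem_univ, true_and, part]
    cases b <;> cases τ <;> simp [W.root_s, W.root_t]

lemma map_potential_not_add_ket [Fintype V] (W : IsWeldedTree n sideV depth lay sideE ep0 ep1 s t)
    (τ : Bool) (R : EuclideanSpace ℂ (E ⊕ Bool) →ₗ[ℂ] EuclideanSpace ℂ (E ⊕ Bool))
    (hR : ∀ u, part sideV depth τ u → R (psi ep0 ep1 s t u) = -psi ep0 ep1 s t u) :
    R (potential lay sideE (!τ) + ket (Sum.inr τ)) =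
      -(potential lay sideE (!τ) + ket (Sum.inr τ)) := by
  rw [W.potential_not_add_ket_eq_sum, map_sum, ← sum_neg_distrib]
  refine sum_congr rfl fun u hu => ?_
  rw [map_smul, hR u (mem_filter.mp hu).2, smul_neg]

lemma norm_sq_half_potential_add_le [Fintype V]
    (W : IsWeldedTree n sideV depth lay sideE ep0 ep1 s t) :
    ‖(1/2 : ℂ) • (potential lay sideE false + potential lay sideE true)‖ ^ 2 ≤
      3 * (n + 1) := by
  rw [EuclideanSpace.norm_sq_eq, Fintype.sum_sum_type]
  simp only [WithLp.ofLp_smul, WithLp.ofLp_add, Pi.smul_apply, Pi.add_apply, potential_apply_inl,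
    potential_apply_inr, add_zero, smul_eq_mul, mul_zero, norm_zero, ne_eq, OfNat.ofNat_ne_zero,
    not_false_eq_true, zero_pow, sum_const_zero]
  calc ∑ e, ‖(1/2 : ℂ) * (layerAmp false (sideE e) (lay e) +
          layerAmp true (sideE e) (lay e))‖ ^ 2
      ≤ ∑ e, (1/2 : ℝ) ^ lay e := sum_le_sum fun e _ => norm_sq_half_add_layerAmp_le _ _
    _ ≤ 2 * (n + 1) := W.sum_half_pow_lay_le
    _ ≤ 3 * (n + 1) := by linarith

end IsWeldedTree

end

variable {V E : Type*} [Fintype V] [Fintype E] [DecidableEq V] [DecidableEq E]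

theorem welded_tree_linear_transduction
    (n : ℕ) (hn : Odd n)
    (sideV : V → Bool) (depth : V → ℕ)
    (lay : E → ℕ) (sideE : E → Bool) (ep0 ep1 : E → V)
    (hlay : ∀ e, 1 ≤ lay e ∧ lay e ≤ n + 1)
    (htree : ∀ e, lay e ≤ n → sideV (ep0 e) = sideE e ∧ depth (ep0 e) = lay e - 1 ∧
        sideV (ep1 e) = sideE e ∧ depth (ep1 e) = lay e)
    (hmid : ∀ e, lay e = n + 1 → sideV (ep0 e) = false ∧ depth (ep0 e) = n ∧
        sideV (ep1 e) = true ∧ depth (ep1 e) = n)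
    (s t : V) (hs : sideV s = false ∧ depth s = 0) (ht : sideV t = true ∧ depth t = 0)
    (hroot : ∀ u, depth u = 0 → (sideV u = false → u = s) ∧ (sideV u = true → u = t))
    (hchild : ∀ u, depth u < n → (Finset.univ.filter fun e => ep0 e = u).card = 2)
    (hparent : ∀ u, 1 ≤ depth u →
        (Finset.univ.filter fun e => lay e ≤ n ∧ ep1 e = u).card = 1)
    (hmidL : ∀ u, sideV u = false → depth u = n →
        (Finset.univ.filter fun e => lay e = n + 1 ∧ ep0 e = u).card = 2)
    (hmidR : ∀ u, sideV u = true → depth u = n →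
        (Finset.univ.filter fun e => lay e = n + 1 ∧ ep1 e = u).card = 2)
    (RA RB : EuclideanSpace ℂ (E ⊕ Bool) →ₗ[ℂ] EuclideanSpace ℂ (E ⊕ Bool))
    (hRAneg : ∀ u, inA sideV depth u → RA (psi ep0 ep1 s t u) = -psi ep0 ep1 s t u)
    (hRAid : ∀ x, (∀ u, inA sideV depth u → (inner ℂ (psi ep0 ep1 s t u) x : ℂ) = 0) → RA x = x)
    (hRBneg : ∀ u, inB sideV depth u → RB (psi ep0 ep1 s t u) = -psi ep0 ep1 s t u)
    (hRBid : ∀ x, (∀ u, inB sideV depth u → (inner ℂ (psi ep0 ep1 s t u) x : ℂ) = 0) → RB x = x) :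
    ∃ v ∈ Submodule.span ℂ
        (Set.range (fun e : E => ket (Sum.inl e) : E → EuclideanSpace ℂ (E ⊕ Bool))),
      ‖v‖ ^ 2 ≤ 3 * (n + 1) ∧
      -(RB (RA (ket (Sum.inr false) + v))) = ket (Sum.inr true) + v := by
  have W : IsWeldedTree n sideV depth lay sideE ep0 ep1 s t :=
    ⟨hn, hlay, htree, hmid, hs, ht, hroot, hchild, hparent, hmidL, hmidR⟩
  set P := potential lay sideE false
  set Q := potential lay sideE true
  set v := (1/2 : ℂ) • (P + Q)
  set χ := (1/2 : ℂ) • (P - Q)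
  have hA : RA (ket (Sum.inr false) + v) = χ := by
    refine apply_eq_of_map_sub_of_map_add RA ?_ ?_
    · rw [show ket (Sum.inr false) + v - χ = Q + ket (Sum.inr false) by module]
      exact W.map_potential_not_add_ket false RA fun u hu => hRAneg u (inA_iff_part.mpr hu)
    · rw [show ket (Sum.inr false) + v + χ = P + ket (Sum.inr false) by module]
      exact hRAid _ fun u hu => W.inner_psi_potential_add_ket_eq_zero false (inA_iff_part.mp hu)
  have hB : RB χ = -(ket (Sum.inr true) + v) := by
    refine apply_eq_of_map_sub_of_map_add RB ?_ ?_
    · rw [show χ - -(ket (Sum.inr true) + v) = P + ket (Sum.inr true) by module]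
      exact W.map_potential_not_add_ket true RB fun u hu => hRBneg u (inB_iff_part.mpr hu)
    · rw [show χ + -(ket (Sum.inr true) + v) = -(Q + ket (Sum.inr true)) by module, map_neg,
        hRBid _ fun u hu => W.inner_psi_potential_add_ket_eq_zero true (inB_iff_part.mp hu)]
  refine ⟨v, Submodule.smul_mem _ _ (Submodule.add_mem _ (potential_mem_span lay sideE false)
    (potential_mem_span lay sideE true)), W.norm_sq_half_potential_add_le, ?_⟩
  rw [hA, hB, neg_neg]

end Stmt11
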